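/- arXiv:2102.07928 — 3 statements merged into one kernel-verified Lean document; each statement's English description precedes it below -/
import Mathlib

section
/- Let Γ be a profinite group acting continuously on groups B and C, let f,g:B→C be Γ-equivariant group homomorphisms, assume h:B→C, h(y)=f(y)g(y)^{−1}, is surjective. For z∈C^Γ let Γ_z denote the intersection over all y∈h^{−1}({z}) of the stabilizer subgroups of y in Γ. Then for z,z'∈C^Γ, one has Γ_z=Γ_{z'} if and only if there exists y∈B fixed by every element of the product set Γ_zΓ_{z'} such that z'=f(y)·z·g(y)^{−1}. -/
/-!
Left multiplication by `y` carries the fibre `h⁻¹(z)` bijectively onto `h⁻¹(f(y) z g(y)⁻¹)`,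
and it commutes with every `σ` fixing `y`. Hence if `Γ_z` fixes `y`, then `Γ_z ⊆ Γ_{z'}` for
`z' = f(y) z g(y)⁻¹`, and applying this to `y⁻¹` gives the reverse inclusion. Conversely, if
`Γ_z = Γ_{z'}`, then `y = w' w⁻¹` for any `w ∈ h⁻¹(z)`, `w' ∈ h⁻¹(z')` is fixed by this group
and satisfies `z' = f(y) z g(y)⁻¹`. Since `Γ_z`, `Γ_{z'}` are subgroups, `y` is fixed by
`Γ_z Γ_{z'}` exactly when it is fixed by both factors.
-/

open MulAction

theorem Subgroup.forall_mul_mem_iff {G : Type*} [Group G] {H K L : Subgroup G} :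
    (∀ σ τ : G, σ ∈ H → τ ∈ K → σ * τ ∈ L) ↔ H ≤ L ∧ K ≤ L :=
  ⟨fun h => ⟨fun σ hσ => by simpa using h σ 1 hσ K.one_mem,
      fun τ hτ => by simpa using h 1 τ H.one_mem hτ⟩,
    fun ⟨hH, hK⟩ _ _ hσ hτ => L.mul_mem (hH hσ) (hK hτ)⟩

theorem MulAction.stabilizer_inv {G M : Type*} [Group G] [Group M]
    [MulDistribMulAction G M] (y : M) : stabilizer G y⁻¹ = stabilizer G y := by
  ext σ
  rw [mem_stabilizer_iff, mem_stabilizer_iff, smul_inv', inv_inj]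

theorem map_mul_mul_inv_map_mul {B C : Type*} [Group B] [Group C] (f g : B →* C) (y w : B) :
    f (y * w) * (g (y * w))⁻¹ = f y * (f w * (g w)⁻¹) * (g y)⁻¹ := by
  simp only [map_mul, mul_inv_rev, mul_assoc]

section FiberStabilizer

variable (Γ : Type*) {B C : Type*} [Group Γ] [Group B] [Group C] [MulDistribMulAction Γ B]
  (f g : B →* C)

def fiberStabilizer (z : C) : Subgroup Γ where
  carrier := {σ | ∀ y : B, f y * (g y)⁻¹ = z → σ • y = y}
  one_mem' _ _ := one_smul Γ _
  mul_mem' hσ hτ y hy := by rw [mul_smul, hτ y hy, hσ y hy]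
  inv_mem' hσ y hy := by rw [inv_smul_eq_iff, hσ y hy]

variable {Γ f g}

theorem fiberStabilizer_le_stabilizer {z : C} {y : B} (hy : f y * (g y)⁻¹ = z) :
    fiberStabilizer Γ f g z ≤ stabilizer Γ y :=
  fun _ hσ => hσ y hy

theorem fiberStabilizer_le_of_eq_mul_mul_inv {z z' : C} {y : B}
    (hy : fiberStabilizer Γ f g z ≤ stabilizer Γ y) (hz' : z' = f y * z * (g y)⁻¹) :
    fiberStabilizer Γ f g z ≤ fiberStabilizer Γ f g z' := by
  intro σ hσ w hw
  have hw' : f (y⁻¹ * w) * (g (y⁻¹ * w))⁻¹ = z := by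
    rw [map_mul_mul_inv_map_mul, hw, hz']
    simp only [map_inv]; group
  calc σ • w = σ • (y * (y⁻¹ * w)) := by rw [mul_inv_cancel_left]
    _ = y * (y⁻¹ * w) := by rw [smul_mul', (hy hσ : σ • y = y), hσ _ hw']
    _ = w := mul_inv_cancel_left y w

theorem fiberStabilizer_eq_iff {z z' : C} (hz : ∃ w, f w * (g w)⁻¹ = z)
    (hz' : ∃ w, f w * (g w)⁻¹ = z') :
    fiberStabilizer Γ f g z = fiberStabilizer Γ f g z' ↔
      ∃ y : B, (fiberStabilizer Γ f g z ≤ stabilizer Γ y ∧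
        fiberStabilizer Γ f g z' ≤ stabilizer Γ y) ∧ z' = f y * z * (g y)⁻¹ := by
  constructor
  · intro heq
    obtain ⟨w, rfl⟩ := hz
    obtain ⟨w', rfl⟩ := hz'
    have hfix : fiberStabilizer Γ f g (f w * (g w)⁻¹) ≤ stabilizer Γ (w' * w⁻¹) := by
      intro σ hσ
      have hσw : σ • w = w := fiberStabilizer_le_stabilizer rfl hσ
      have hσw' : σ • w' = w' := fiberStabilizer_le_stabilizer rfl (heq ▸ hσ)
      rw [mem_stabilizer_iff, smul_mul', smul_inv', hσw, hσw']
    refine ⟨w' * w⁻¹, ⟨hfix, heq ▸ hfix⟩, ?_⟩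
    simp only [map_mul, map_inv]; group
  · rintro ⟨y, ⟨hy, hy'⟩, rfl⟩
    refine le_antisymm (fiberStabilizer_le_of_eq_mul_mul_inv hy rfl)
      (fiberStabilizer_le_of_eq_mul_mul_inv (y := y⁻¹)
        (hy'.trans (stabilizer_inv y).ge) ?_)
    simp only [map_inv]; group

end FiberStabilizer

theorem stmt3_general {Γ B C : Type*} [Group Γ]
    [Group B] [Group C] [MulDistribMulAction Γ B]
    (f g : B →* C)
    (hsurj : ∀ c : C, ∃ y : B, f y * (g y)⁻¹ = c)
    (z z' : C) :
    ({σ : Γ | ∀ y : B, f y * (g y)⁻¹ = z → σ • y = y} =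
        {σ : Γ | ∀ y : B, f y * (g y)⁻¹ = z' → σ • y = y}) ↔
      (∃ y : B,
        (∀ σ τ : Γ, (∀ w : B, f w * (g w)⁻¹ = z → σ • w = w) →
          (∀ w : B, f w * (g w)⁻¹ = z' → τ • w = w) → (σ * τ) • y = y) ∧
        z' = f y * z * (g y)⁻¹) :=
  SetLike.coe_set_eq.trans <| (fiberStabilizer_eq_iff (hsurj z) (hsurj z')).trans <|
    exists_congr fun _ => and_congr_left' Subgroup.forall_mul_mem_iff.symm

/-- **Proposition `lk`(c)**: with `Γ, B, C, f, g, h` as in Proposition `lk`(a), for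
`z ∈ C^Γ` let `Γ_z` be the intersection of the stabilizers of all elements of
`h⁻¹({z})`.  Then for `z, z' ∈ C^Γ` one has `Γ_z = Γ_{z'}` if and only if there exists a
`y ∈ B` fixed by every element of the product set `Γ_z·Γ_{z'}` such that
`z' = f(y)·z·g(y)⁻¹`. -/
theorem stmt3 {Γ B C : Type*} [Group Γ] [TopologicalSpace Γ] [IsTopologicalGroup Γ]
    [CompactSpace Γ] [TotallyDisconnectedSpace Γ] [T2Space Γ]
    [Group B] [Group C] [MulDistribMulAction Γ B] [MulDistribMulAction Γ C]
    (hBcont : ∀ b : B, IsOpen {σ : Γ | σ • b = b})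
    (hCcont : ∀ c : C, IsOpen {σ : Γ | σ • c = c})
    (f g : B →* C)
    (hf : ∀ (σ : Γ) (b : B), f (σ • b) = σ • f b)
    (hg : ∀ (σ : Γ) (b : B), g (σ • b) = σ • g b)
    (hsurj : ∀ c : C, ∃ y : B, f y * (g y)⁻¹ = c)
    (z z' : C) (hz : ∀ σ : Γ, σ • z = z) (hz' : ∀ σ : Γ, σ • z' = z') :
    ({σ : Γ | ∀ y : B, f y * (g y)⁻¹ = z → σ • y = y} =
        {σ : Γ | ∀ y : B, f y * (g y)⁻¹ = z' → σ • y = y}) ↔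
      (∃ y : B,
        (∀ σ τ : Γ, (∀ w : B, f w * (g w)⁻¹ = z → σ • w = w) →
          (∀ w : B, f w * (g w)⁻¹ = z' → τ • w = w) → (σ * τ) • y = y) ∧
        z' = f y * z * (g y)⁻¹) :=
  stmt3_general f g hsurj z z'
end

section
/- Let G be a group admitting a descending normal series G=G_0 ⊵ G_1 ⊵ ⋯ ⊵ G_r={1} (each G_i normal in G). Let f,g:G→G be group homomorphisms with f^{−1}(G_i)=g^{−1}(G_i)=G_i for all i, and define h:G→G by h(y)=f(y)g(y)^{−1}. For each 0≤i<r, the assignment yG_{i+1}↦f(y)g(y)^{−1}G_{i+1} gives a well-defined map h'_i:G_i/G_{i+1}→G_i/G_{i+1}. If h'_i is surjective for every i, then h is surjective. -/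
/-- **Proposition `pa`**: let `G` be a group with a descending normal series
`G = G_0 ⊵ G_1 ⊵ ⋯ ⊵ G_r = {1}`, and let `f, g : G → G` be group homomorphisms with
`f⁻¹(G_i) = g⁻¹(G_i) = G_i` for all `i`.  Set `h(y) = f(y)·g(y)⁻¹`.  Then
(well-definedness) `h` induces a map `h'_i : G_i/G_{i+1} → G_i/G_{i+1}` for each `i < r`,
and if all the induced maps `h'_i` are surjective then `h` is surjective. -/
theorem stmt4 {G : Type*} [Group G] (r : ℕ) (Gs : ℕ → Subgroup G)
    (h0 : Gs 0 = ⊤) (hr : Gs r = ⊥)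
    (hdesc : ∀ i : ℕ, i < r → Gs (i + 1) ≤ Gs i)
    (hnorm : ∀ i : ℕ, i ≤ r → (Gs i).Normal)
    (f g : G →* G)
    (hf : ∀ i : ℕ, i ≤ r → (Gs i).comap f = Gs i)
    (hg : ∀ i : ℕ, i ≤ r → (Gs i).comap g = Gs i) :
    -- `h'_i : yG_{i+1} ↦ f(y)g(y)⁻¹G_{i+1}` is well defined on `G_i/G_{i+1}`:
    (∀ i : ℕ, i < r → ∀ y y' : G, y ∈ Gs i → y' ∈ Gs i → y⁻¹ * y' ∈ Gs (i + 1) →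
      (f y * (g y)⁻¹)⁻¹ * (f y' * (g y')⁻¹) ∈ Gs (i + 1)) ∧
    -- if every `h'_i` is surjective, then `h` is surjective:
    ((∀ i : ℕ, i < r → ∀ c : G, c ∈ Gs i →
        ∃ y ∈ Gs i, (f y * (g y)⁻¹)⁻¹ * c ∈ Gs (i + 1)) →
      Function.Surjective (fun y : G => f y * (g y)⁻¹)) := by
  constructor
  · -- well-definedness
    intro i hi y y' hy hy' hz
    have hir : i + 1 ≤ r := hi
    have hfz : f (y⁻¹ * y') ∈ Gs (i + 1) := by
      have := hz; rw [← hf (i + 1) hir] at this; exact this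
    have hgz : g (y⁻¹ * y') ∈ Gs (i + 1) := by
      have := hz; rw [← hg (i + 1) hir] at this; exact this
    have heq : (f y * (g y)⁻¹)⁻¹ * (f y' * (g y')⁻¹)
        = g y * (f (y⁻¹ * y') * (g (y⁻¹ * y'))⁻¹) * (g y)⁻¹ := by
      simp only [map_mul, map_inv]
      group
    rw [heq]
    exact (hnorm (i + 1) hir).conj_mem _ (mul_mem hfz (inv_mem hgz)) (g y)
  · -- surjectivity
    intro hsurj c
    have key : ∀ i, i ≤ r → ∃ y : G, (f y * (g y)⁻¹)⁻¹ * c ∈ Gs i := by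
      intro i
      induction i with
      | zero => intro _; exact ⟨1, by simp [h0]⟩
      | succ i ih =>
        intro hir
        have hi : i < r := hir
        obtain ⟨y₀, hy₀⟩ := ih (le_of_lt hi)
        set d : G := (f y₀ * (g y₀)⁻¹)⁻¹ * c with hd
        have hc' : (g y₀)⁻¹ * d * g y₀ ∈ Gs i := by
          have := (hnorm i (le_of_lt hi)).conj_mem d hy₀ (g y₀)⁻¹
          simpa using this
        obtain ⟨z, _, hz2⟩ := hsurj i hi ((g y₀)⁻¹ * d * g y₀) hc'
        refine ⟨y₀ * z, ?_⟩
        have heq : (f (y₀ * z) * (g (y₀ * z))⁻¹)⁻¹ * c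
            = g y₀ * ((f z * (g z)⁻¹)⁻¹ * ((g y₀)⁻¹ * d * g y₀)) * (g y₀)⁻¹ := by
          simp only [map_mul, map_inv, hd]
          group
        rw [heq]
        exact (hnorm (i + 1) hir).conj_mem _ hz2 (g y₀)
    obtain ⟨y, hy⟩ := key r le_rfl
    rw [hr, Subgroup.mem_bot] at hy
    exact ⟨y, inv_mul_eq_one.mp hy⟩
end

section
/- Let L/K be a finite separable totally ramified extension of complete discrete valuation fields with common perfect residue field k, ramification index e, and different of valuation δ. For an integer n set n'=e(n+1)−δ−1. Then the canonical maps K→L and Ω_K^1→Ω_L^1 induce maps F_nK→F_{en}L, F_{n−1}K→F_{en−1}L, F_nΩ_K^1→F_{n'}Ω_L^1 and F_{n−1}Ω_K^1→F_{n'−1}Ω_L^1; there is a unique nonzero element θ∈Gr_{e−δ−1}L≅k such that for every n the square formed by Gr_nK→Gr_{en}L→(multiplication by θ)→Gr_{n'}L and Gr_nΩ_K^1→Gr_{n'}Ω_L^1, with vertical maps μ, commutes; and for every χ∈Ω_K^1 with −v_K(χ)=n one has −v_L(χ)=e(n+1)−δ−1 (computing the image of χ in Ω_L^1). -/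
/-- A normalized (additive) discrete valuation on a field `K`; the value `v 0` is junk.
Together with `IsComplete` and `ResiduePerfect` below, this models a complete discrete
valuation field with perfect residue field. -/
structure DVal (K : Type*) [Field K] where
  v : K → ℤ
  v_mul : ∀ {x y : K}, x ≠ 0 → y ≠ 0 → v (x * y) = v x + v y
  v_add : ∀ {x y : K}, x ≠ 0 → y ≠ 0 → x + y ≠ 0 → min (v x) (v y) ≤ v (x + y)
  exists_uniformizer : ∃ t : K, t ≠ 0 ∧ v t = 1

namespace DVal

variable {K : Type*} [Field K] (V : DVal K)

/-- `x` lies in the valuation ring `𝒪_K`. -/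
def integer (x : K) : Prop := x = 0 ∨ 0 ≤ V.v x

/-- `x` lies in the maximal ideal `𝔪_K`. -/
def maxIdeal (x : K) : Prop := x = 0 ∨ 1 ≤ V.v x

/-- `t` is a uniformizer. -/
def IsUniformizer (t : K) : Prop := t ≠ 0 ∧ V.v t = 1

/-- `x ∈ F_nK = 𝔪_K^{-n}`, i.e. `v(x) ≥ -n` (or `x = 0`). -/
def Fil (n : ℤ) (x : K) : Prop := x = 0 ∨ -n ≤ V.v x

/-- `f` is a Cauchy sequence for `V`. -/
def IsCauchy (f : ℕ → K) : Prop :=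
  ∀ N : ℤ, ∃ M : ℕ, ∀ m k : ℕ, M ≤ m → M ≤ k → f m = f k ∨ N ≤ V.v (f m - f k)

/-- `f` converges to `x` for `V`. -/
def Tendsto (f : ℕ → K) (x : K) : Prop :=
  ∀ N : ℤ, ∃ M : ℕ, ∀ m : ℕ, M ≤ m → f m = x ∨ N ≤ V.v (f m - x)

/-- `K` is complete for `V`. -/
def IsComplete : Prop := ∀ f : ℕ → K, V.IsCauchy f → ∃ x : K, V.Tendsto f x

/-- The residue field `k = 𝒪_K/𝔪_K` is perfect (in characteristic `p`): the Frobenius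
is surjective on the residue field. -/
def ResiduePerfect (p : ℕ) : Prop :=
  ∀ x : K, V.integer x → ∃ y : K, V.integer y ∧ V.maxIdeal (x - y ^ p)

end DVal

namespace DVal

variable {K : Type*} [Field K] (V : DVal K)

lemma v_one : V.v 1 = 0 := by
  have := V.v_mul (one_ne_zero (α := K)) one_ne_zero
  rw [mul_one] at this; omega

lemma v_neg {x : K} (hx : x ≠ 0) : V.v (-x) = V.v x := by
  have h1 : V.v ((-1 : K) * (-1)) = V.v (-1) + V.v (-1) :=
    V.v_mul (by norm_num) (by norm_num)
  rw [show ((-1:K) * -1) = 1 by ring, V.v_one] at h1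
  have := V.v_mul (show (-1:K) ≠ 0 by norm_num) hx
  rw [neg_one_mul] at this
  omega

lemma v_inv {x : K} (hx : x ≠ 0) : V.v x⁻¹ = - V.v x := by
  have := V.v_mul hx (inv_ne_zero hx)
  rw [mul_inv_cancel₀ hx, V.v_one] at this; omega

lemma v_pow {x : K} (hx : x ≠ 0) (n : ℕ) : V.v (x ^ n) = n * V.v x := by
  induction n with
  | zero => simpa using V.v_one
  | succ n ih =>
      rw [pow_succ, V.v_mul (pow_ne_zero _ hx) hx, ih]; push_cast; ring

lemma v_zpow {x : K} (hx : x ≠ 0) (n : ℤ) : V.v (x ^ n) = n * V.v x := by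
  cases n with
  | ofNat n => simpa using V.v_pow hx n
  | negSucc n =>
      rw [zpow_negSucc, V.v_inv (pow_ne_zero _ hx), V.v_pow hx]
      simp [Int.negSucc_eq]; push_cast; ring

lemma v_sub {x y : K} (hx : x ≠ 0) (hy : y ≠ 0) (hxy : x - y ≠ 0) :
    min (V.v x) (V.v y) ≤ V.v (x - y) := by
  have := V.v_add hx (neg_ne_zero.2 hy) (by rwa [← sub_eq_add_neg])
  rwa [← sub_eq_add_neg, V.v_neg hy] at this

/-- two-term sharp ultrametric: if `v x < v y` (or `y = 0`) then `x + y ≠ 0` and `v (x+y) = v x`. -/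
lemma add_eq {x y : K} (hx : x ≠ 0) (hy : y = 0 ∨ (y ≠ 0 ∧ V.v x < V.v y)) :
    x + y ≠ 0 ∧ V.v (x + y) = V.v x := by
  rcases hy with rfl | ⟨hy, hlt⟩
  · simpa using hx
  have hne : x + y ≠ 0 := by
    intro h
    have hyx : y = -x := by linear_combination h
    rw [hyx, V.v_neg hx] at hlt; omega
  refine ⟨hne, ?_⟩
  have h1 : min (V.v x) (V.v y) ≤ V.v (x + y) := V.v_add hx hy hne
  have h2 : min (V.v (x + y)) (V.v y) ≤ V.v x := by
    have := V.v_sub hne hy (by simpa using hx)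
    simpa using this
  omega


lemma sum_ge {ι : Type*} (s : Finset ι) (f : ι → K) (N : ℤ)
    (h : ∀ i ∈ s, f i = 0 ∨ N ≤ V.v (f i)) :
    (∑ i ∈ s, f i) = 0 ∨ N ≤ V.v (∑ i ∈ s, f i) := by
  classical
  induction s using Finset.induction_on with
  | empty => simp
  | @insert a t ha ih =>
      have ht := ih (fun i hi => h i (Finset.mem_insert_of_mem hi))
      have hfa := h a (Finset.mem_insert_self a t)
      rw [Finset.sum_insert ha]
      rcases hfa with h0 | hN
      · rw [h0, zero_add]; exact ht
      · rcases ht with h0' | hN'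
        · rw [h0', add_zero]
          by_cases hz : f a = 0
          · exact Or.inl hz
          · exact Or.inr hN
        · by_cases hz : f a = 0
          · rw [hz, zero_add]; exact Or.inr hN'
          · by_cases hz2 : ∑ i ∈ t, f i = 0
            · rw [hz2, add_zero]; exact Or.inr hN
            · by_cases hz3 : f a + ∑ i ∈ t, f i = 0
              · exact Or.inl hz3
              · right
                have := V.v_add hz hz2 hz3
                omega

lemma add_ge {x y : K} (N : ℤ) (hx : x = 0 ∨ N ≤ V.v x) (hy : y = 0 ∨ N ≤ V.v y) :
    x + y = 0 ∨ N ≤ V.v (x + y) := by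
  rcases hx with rfl | hx
  · rw [zero_add]; exact hy.imp id (fun h => h)
  rcases hy with rfl | hy
  · rw [add_zero]
    by_cases hx0 : x = 0
    · exact Or.inl hx0
    · exact Or.inr hx
  by_cases hx0 : x = 0
  · rw [hx0, zero_add]
    by_cases hy0 : y = 0
    · exact Or.inl hy0
    · exact Or.inr hy
  by_cases hy0 : y = 0
  · rw [hy0, add_zero]; exact Or.inr hx
  by_cases hz : x + y = 0
  · exact Or.inl hz
  · right; have := V.v_add hx0 hy0 hz; omega

lemma sum_eq {ι : Type*} (s : Finset ι) (f : ι → K) (a : ι) (ha : a ∈ s) (hfa : f a ≠ 0)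
    (h : ∀ i ∈ s, i ≠ a → f i = 0 ∨ V.v (f a) < V.v (f i)) :
    (∑ i ∈ s, f i) ≠ 0 ∧ V.v (∑ i ∈ s, f i) = V.v (f a) := by
  classical
  rw [← Finset.add_sum_erase s f ha]
  have hrest : (∑ i ∈ s.erase a, f i) = 0 ∨ V.v (f a) + 1 ≤ V.v (∑ i ∈ s.erase a, f i) :=
    V.sum_ge _ f _ (fun i hi => by
      rcases h i (Finset.mem_of_mem_erase hi) (Finset.ne_of_mem_erase hi) with h0 | hlt
      · exact Or.inl h0
      · exact Or.inr (by omega))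
  apply V.add_eq hfa
  rcases hrest with h0 | hN
  · exact Or.inl h0
  · by_cases hz : (∑ i ∈ s.erase a, f i) = 0
    · exact Or.inl hz
    · exact Or.inr ⟨hz, by omega⟩

lemma integer_zero : V.integer 0 := Or.inl rfl

lemma integer_one : V.integer 1 := Or.inr (by rw [V.v_one])

lemma integer_mul {x y : K} (hx : V.integer x) (hy : V.integer y) : V.integer (x * y) := by
  rcases hx with rfl | hx
  · exact Or.inl (zero_mul y)
  rcases hy with rfl | hy
  · exact Or.inl (mul_zero x)
  by_cases hx0 : x = 0
  · exact Or.inl (by rw [hx0, zero_mul])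
  by_cases hy0 : y = 0
  · exact Or.inl (by rw [hy0, mul_zero])
  exact Or.inr (by rw [V.v_mul hx0 hy0]; omega)

lemma integer_add {x y : K} (hx : V.integer x) (hy : V.integer y) : V.integer (x + y) :=
  V.add_ge 0 hx hy

lemma integer_sum {ι : Type*} (s : Finset ι) (f : ι → K)
    (h : ∀ i ∈ s, V.integer (f i)) : V.integer (∑ i ∈ s, f i) :=
  V.sum_ge s f 0 h

end DVal


/-- The filtration `F_nΩ = 𝔪^{-n-1}·Ω_𝒪` on a module `Ω` of differentials with
distinguished `𝒪`-submodule (given as a subset) `Ω𝒪`. -/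
def FilOmega {K Ω : Type*} [Field K] [AddCommGroup Ω] [Module K Ω]
    (V : DVal K) (ΩO : Set Ω) (n : ℤ) : Set Ω :=
  {z | ∃ c : K, V.Fil (n + 1) c ∧ ∃ ω ∈ ΩO, z = c • ω}

set_option maxHeartbeats 4000000

/-- **Lemma `lg`**: let `L/K` be a finite separable totally ramified extension of
complete discrete valuation fields with common perfect residue field `k`, ramification
index `e` and different of valuation `δ` (characterized by: the inverse different
`{x | Tr_{L/K}(x·𝒪_L) ⊆ 𝒪_K}` equals `𝔪_L^{-δ}`).  For an integer `n` set
`n' = e(n+1) − δ − 1`.  Then the canonical maps `K → L` and `Ω¹_K → Ω¹_L` induce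
`F_nK → F_{en}L`, `F_{n-1}K → F_{en-1}L`, `F_nΩ¹_K → F_{n'}Ω¹_L` and
`F_{n-1}Ω¹_K → F_{n'-1}Ω¹_L`; there is a unique nonzero `θ ∈ Gr_{e-δ-1}L` making the
square `Gr_nK → Gr_{en}L → (θ·) → Gr_{n'}L`, with vertical maps `μ`, and
`Gr_nΩ¹_K → Gr_{n'}Ω¹_L` commute for all `n`; and `−v_K(χ) = n` implies
`−v_L(χ) = e(n+1) − δ − 1` for every `χ ∈ Ω¹_K`. -/
theorem stmt11 (p : ℕ) (hp : p.Prime)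
    (K : Type*) [Field K] [CharP K p]
    (VK : DVal K) (hcompK : VK.IsComplete) (hperfK : VK.ResiduePerfect p)
    (L : Type*) [Field L] [Algebra K L] [FiniteDimensional K L] [Algebra.IsSeparable K L]
    (VL : DVal L) (hcompL : VL.IsComplete)
    -- totally ramified with ramification index `e = [L:K]`:
    (e : ℤ) (he : e = (Module.finrank K L : ℤ))
    (hext : ∀ x : K, x ≠ 0 → VL.v (algebraMap K L x) = e * VK.v x)
    -- the residue field of `L` coincides with that of `K`:
    (hres : ∀ x : L, VL.integer x → ∃ u : K, VK.integer u ∧ VL.maxIdeal (x - algebraMap K L u))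
    -- `δ` is the valuation of the different of `L/K`:
    (δ : ℤ)
    (hδ : ∀ x : L, (∀ z : L, VL.integer z → VK.integer (Algebra.trace K L (x * z))) ↔
      (x = 0 ∨ -δ ≤ VL.v x))
    -- continuous Kähler differentials of `K`:
    (ΩK : Type*) [AddCommGroup ΩK] [Module K ΩK]
    (dK : K → ΩK)
    (hdK_add : ∀ x y : K, dK (x + y) = dK x + dK y)
    (hdK_mul : ∀ x y : K, dK (x * y) = x • dK y + y • dK x)
    (ΩKO : Set ΩK)
    (hdKO : ∀ x : K, VK.integer x → dK x ∈ ΩKO)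
    (hΩKO_gen : ∀ t : K, VK.IsUniformizer t → ∀ ω ∈ ΩKO, ∃ c : K, VK.integer c ∧ ω = c • dK t)
    (hdKt_ne : ∀ t : K, VK.IsUniformizer t → dK t ≠ 0)
    (hKspan : ∀ t : K, VK.IsUniformizer t → ∀ ω : ΩK, ∃ c : K, ω = c • dK t)
    -- continuous Kähler differentials of `L`:
    (ΩL : Type*) [AddCommGroup ΩL] [Module L ΩL]
    (dL : L → ΩL)
    (hdL_add : ∀ x y : L, dL (x + y) = dL x + dL y)
    (hdL_mul : ∀ x y : L, dL (x * y) = x • dL y + y • dL x)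
    (ΩLO : Set ΩL)
    (hdLO : ∀ x : L, VL.integer x → dL x ∈ ΩLO)
    (hΩLO_gen : ∀ t : L, VL.IsUniformizer t → ∀ ω ∈ ΩLO, ∃ c : L, VL.integer c ∧ ω = c • dL t)
    (hdLt_ne : ∀ t : L, VL.IsUniformizer t → dL t ≠ 0)
    (hLspan : ∀ t : L, VL.IsUniformizer t → ∀ ω : ΩL, ∃ c : L, ω = c • dL t)
    -- the canonical map `ι : Ω¹_K → Ω¹_L`:
    (ι : ΩK → ΩL)
    (hι_add : ∀ ω ω' : ΩK, ι (ω + ω') = ι ω + ι ω')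
    (hι_smul : ∀ (c : K) (ω : ΩK), ι (c • ω) = algebraMap K L c • ι ω)
    (hι_d : ∀ x : K, ι (dK x) = dL (algebraMap K L x)) :
    -- `K → L` induces `F_nK → F_{en}L` and `F_{n-1}K → F_{en-1}L`:
    (∀ (n : ℤ) (x : K), VK.Fil n x → VL.Fil (e * n) (algebraMap K L x)) ∧
    (∀ (n : ℤ) (x : K), VK.Fil (n - 1) x → VL.Fil (e * n - 1) (algebraMap K L x)) ∧
    -- `Ω¹_K → Ω¹_L` induces `F_nΩ¹_K → F_{n'}Ω¹_L` and `F_{n-1}Ω¹_K → F_{n'-1}Ω¹_L`: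
    (∀ (n : ℤ) (ω : ΩK), ω ∈ FilOmega VK ΩKO n →
      ι ω ∈ FilOmega VL ΩLO (e * (n + 1) - δ - 1)) ∧
    (∀ (n : ℤ) (ω : ΩK), ω ∈ FilOmega VK ΩKO (n - 1) →
      ι ω ∈ FilOmega VL ΩLO (e * (n + 1) - δ - 1 - 1)) ∧
    -- existence and uniqueness of `θ ∈ Gr_{e-δ-1}L`:
    (∃ θ : L, θ ≠ 0 ∧ VL.v θ = -(e - δ - 1) ∧
      (∀ (tK : K), VK.IsUniformizer tK → ∀ tL : L, VL.IsUniformizer tL →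
        ∀ (n : ℤ) (x : K), VK.Fil n x →
          ι ((x * tK⁻¹) • dK tK) - ((θ * algebraMap K L x * tL⁻¹) • dL tL)
            ∈ FilOmega VL ΩLO (e * (n + 1) - δ - 1 - 1)) ∧
      (∀ θ' : L, θ' ≠ 0 → VL.v θ' = -(e - δ - 1) →
        (∀ (tK : K), VK.IsUniformizer tK → ∀ tL : L, VL.IsUniformizer tL →
          ∀ (n : ℤ) (x : K), VK.Fil n x →
            ι ((x * tK⁻¹) • dK tK) - ((θ' * algebraMap K L x * tL⁻¹) • dL tL)
              ∈ FilOmega VL ΩLO (e * (n + 1) - δ - 1 - 1)) →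
        VL.Fil (e - δ - 1 - 1) (θ - θ'))) ∧
    -- `−v_K(χ) = n` implies `−v_L(χ) = e(n+1) − δ − 1`:
    (∀ (n : ℤ) (χ : ΩK), χ ∈ FilOmega VK ΩKO n → χ ∉ FilOmega VK ΩKO (n - 1) →
      ι χ ∈ FilOmega VL ΩLO (e * (n + 1) - δ - 1) ∧
        ι χ ∉ FilOmega VL ΩLO (e * (n + 1) - δ - 1 - 1)) := by
  classical
  obtain ⟨tL, htL0, htL1⟩ := VL.exists_uniformizer
  obtain ⟨tK, htK0, htK1⟩ := VK.exists_uniformizer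
  have hE1 : 1 ≤ Module.finrank K L := Module.finrank_pos
  set E : ℕ := Module.finrank K L with hE
  have heE : e = (E : ℤ) := he
  have hE1' : (1:ℤ) ≤ (E:ℤ) := by exact_mod_cast hE1
  have halg0 : ∀ x : K, x ≠ 0 → algebraMap K L x ≠ 0 := fun x hx => by
    simpa using (map_ne_zero (algebraMap K L)).mpr hx
  have hvalg : ∀ x : K, x ≠ 0 → VL.v (algebraMap K L x) = (E:ℤ) * VK.v x := by
    intro x hx; rw [← heE]; exact hext x hx
  have hvpow : ∀ i : ℕ, VL.v (tL ^ i) = (i : ℤ) := by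
    intro i; rw [VL.v_pow htL0, htL1, mul_one]
  have hterm : ∀ (x : K), x ≠ 0 → ∀ i : ℕ,
      VL.v (algebraMap K L x * tL ^ i) = (E:ℤ) * VK.v x + i := by
    intro x hx i
    rw [VL.v_mul (halg0 x hx) (pow_ne_zero _ htL0), hvalg x hx, hvpow]
  have habs : ∀ d i j : ℤ, i - j = (E:ℤ) * d → d ≠ 0 → (E:ℤ) ≤ i - j ∨ i - j ≤ -(E:ℤ) := by
    intro d i j h hd
    rcases lt_or_gt_of_ne hd with hd1 | hd1
    · right
      have : (E:ℤ) * d ≤ (E:ℤ) * (-1) := mul_le_mul_of_nonneg_left (by omega) (by omega)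
      omega
    · left
      have : (E:ℤ) * 1 ≤ (E:ℤ) * d := mul_le_mul_of_nonneg_left (by omega) (by omega)
      omega
  have key : ∀ d i j : ℤ, i - j = (E:ℤ) * d → -(E:ℤ) < i - j → i - j < E → i = j := by
    intro d i j h h1 h2
    by_cases hd : d = 0
    · rw [hd, mul_zero] at h; omega
    · rcases habs d i j h hd with h3 | h3 <;> omega
  have key2 : ∀ d i j : ℤ, 0 ≤ i → i ≤ E → 0 ≤ j → j ≤ E → i ≠ j → i - j = (E:ℤ) * d →
      (i = 0 ∧ j = E) ∨ (i = E ∧ j = 0) := by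
    intro d i j hi hiE hj hjE hne h
    by_cases hd : d = 0
    · rw [hd, mul_zero] at h; omega
    rcases habs d i j h hd with h3 | h3
    · right; omega
    · left; omega
  -- Linear independence of powers of tL
  have hli : LinearIndependent K (fun i : Fin E => tL ^ (i : ℕ)) := by
    rw [Fintype.linearIndependent_iff]
    intro g hg
    by_contra hcon
    push_neg at hcon
    obtain ⟨i0, hi0⟩ := hcon
    set f : Fin E → L := fun i => algebraMap K L (g i) * tL ^ (i:ℕ) with hf
    set s : Finset (Fin E) := Finset.univ.filter (fun i : Fin E => g i ≠ 0) with hs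
    have hsum : ∑ i ∈ s, f i = 0 := by
      rw [← hg]
      rw [show ∑ i, g i • tL ^ (i:ℕ) = ∑ i, f i from
        Finset.sum_congr rfl (fun i _ => Algebra.smul_def (g i) _)]
      apply Finset.sum_subset (Finset.subset_univ s)
      intro i _ hi
      have : g i = 0 := by simpa [hs] using hi
      simp [hf, this]
    have hne : ∀ i ∈ s, g i ≠ 0 := fun i hi => by simpa [hs] using hi
    have hsn : s.Nonempty := ⟨i0, by simp [hs, hi0]⟩
    obtain ⟨a, has, hamin⟩ := Finset.exists_min_image s (fun i => VL.v (f i)) hsn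
    have := (VL.sum_eq s f a has (by
      simp only [hf]
      exact mul_ne_zero (halg0 _ (hne a has)) (pow_ne_zero _ htL0))
      (fun i hi hia => by
        right
        have h1 := hamin i hi
        rcases lt_or_eq_of_le h1 with h | h
        · exact h
        · exfalso
          apply hia
          have hva : VL.v (f a) = (E:ℤ) * VK.v (g a) + a := hterm _ (hne a has) _
          have hvi : VL.v (f i) = (E:ℤ) * VK.v (g i) + i := hterm _ (hne i hi) _
          rw [hva, hvi] at h
          have : ((i:Fin E):ℕ) = ((a:Fin E):ℕ) → i = a := fun hh => Fin.ext hh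
          apply Fin.ext
          have := key (VK.v (g a) - VK.v (g i)) (i:ℕ) (a:ℕ) (by push_cast; linear_combination -h)
            (by have := i.isLt; have := a.isLt; push_cast; omega)
            (by have := i.isLt; have := a.isLt; push_cast; omega)
          exact_mod_cast this)).1
    exact this hsum
  haveI : Nonempty (Fin E) := ⟨⟨0, hE1⟩⟩
  let Bs : Module.Basis (Fin E) K L := basisOfLinearIndependentOfCardEqFinrank hli (by simp [hE])
  have hBs : ∀ i : Fin E, Bs i = tL ^ (i:ℕ) := by
    intro i; rw [show ⇑Bs = fun i : Fin E => tL ^ (i:ℕ) from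
      coe_basisOfLinearIndependentOfCardEqFinrank hli _]
  let pb : PowerBasis K L := ⟨tL, E, Bs, hBs⟩
  have hint : IsIntegral K tL := IsIntegral.of_finite K tL
  set g : Polynomial K := minpoly K tL with hgdef
  have hgmonic : g.Monic := minpoly.monic hint
  have hdeg : g.natDegree = E := pb.natDegree_minpoly
  set a : ℕ → K := fun i => g.coeff i with hadef
  have haE : a E = 1 := by
    show g.coeff E = 1
    rw [← hdeg]; exact hgmonic.coeff_natDegree
  set Q : Polynomial L := g.map (algebraMap K L) with hQdef
  have hQdeg : Q.natDegree = E := by rw [hQdef, hgmonic.natDegree_map, hdeg]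
  have hQeval : Q.eval tL = 0 := by
    rw [hQdef, Polynomial.eval_map, ← Polynomial.aeval_def]
    exact minpoly.aeval K tL
  have hrel : ∑ i ∈ Finset.range (E+1), algebraMap K L (a i) * tL ^ i = 0 := by
    have h1 := Polynomial.eval_eq_sum_range (p := Q) tL
    rw [hQdeg] at h1
    rw [← hQeval, h1]
    exact Finset.sum_congr rfl (fun i _ => by rw [hQdef, Polynomial.coeff_map])
  set F : ℕ → L := fun i => algebraMap K L (a i) * tL ^ i with hF
  set s2 : Finset ℕ := (Finset.range (E+1)).filter (fun i => a i ≠ 0) with hsdef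
  have hEs : E ∈ s2 := by
    simp only [hsdef, Finset.mem_filter, Finset.mem_range]
    exact ⟨by omega, by rw [haE]; exact one_ne_zero⟩
  have hsum0 : ∑ i ∈ s2, F i = 0 := by
    rw [← hrel]
    apply Finset.sum_subset (Finset.filter_subset _ _)
    intro i hi hni
    have : a i = 0 := by
      by_contra hc
      exact hni (Finset.mem_filter.mpr ⟨hi, hc⟩)
    simp [hF, this]
  have hsne : ∀ i ∈ s2, a i ≠ 0 := fun i hi => (Finset.mem_filter.mp hi).2
  have hsle : ∀ i ∈ s2, i ≤ E := fun i hi => by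
    have := (Finset.mem_filter.mp hi).1
    rw [Finset.mem_range] at this; omega
  have hvF : ∀ i ∈ s2, VL.v (F i) = (E:ℤ) * VK.v (a i) + i :=
    fun i hi => hterm _ (hsne i hi) i
  obtain ⟨m, hms, hmmin⟩ := Finset.exists_min_image s2 (fun i => VL.v (F i)) ⟨E, hEs⟩
  have hFm0 : F m ≠ 0 := mul_ne_zero (halg0 _ (hsne m hms)) (pow_ne_zero _ htL0)
  have hnotstrict : ¬ (∀ i ∈ s2, i ≠ m → F i = 0 ∨ VL.v (F m) < VL.v (F i)) := by
    intro hstrict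
    exact (VL.sum_eq s2 F m hms hFm0 hstrict).1 hsum0
  push_neg at hnotstrict
  obtain ⟨j, hjs, hjm, hjne, hjle⟩ := hnotstrict
  have hveq : VL.v (F j) = VL.v (F m) := le_antisymm hjle (hmmin j hjs)
  have hmjE : (j = 0 ∧ m = E) ∨ (j = E ∧ m = 0) := by
    have h1 := hvF j hjs
    have h2 := hvF m hms
    have hj2 := hsle j hjs
    have hm2 := hsle m hms
    have := key2 (VK.v (a m) - VK.v (a j)) (j:ℤ) (m:ℤ) (by positivity) (by exact_mod_cast hj2)
      (by positivity) (by exact_mod_cast hm2) (by exact_mod_cast fun hh => hjm (by exact_mod_cast hh))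
      (by rw [h1, h2] at hveq; push_cast; linear_combination hveq)
    rcases this with ⟨hh1, hh2⟩ | ⟨hh1, hh2⟩
    · left; constructor <;> [exact_mod_cast hh1; exact_mod_cast hh2]
    · right; constructor <;> [exact_mod_cast hh1; exact_mod_cast hh2]
  have hEval : VL.v (F E) = (E:ℤ) := by rw [hvF E hEs, haE, VK.v_one]; ring
  have hminE : VL.v (F m) = (E:ℤ) := by
    rcases hmjE with ⟨hj0, hmE⟩ | ⟨hjE, hm0⟩
    · rw [hmE]; exact hEval
    · rw [← hveq, hjE]; exact hEval
  have h0mem : 0 ∈ s2 := by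
    rcases hmjE with ⟨hj0, hmE⟩ | ⟨hjE, hm0⟩
    · rw [← hj0]; exact hjs
    · rw [← hm0]; exact hms
  have hvF0 : VL.v (F 0) = (E:ℤ) := by
    rcases hmjE with ⟨hj0, hmE⟩ | ⟨hjE, hm0⟩
    · rw [← hj0]; rw [hveq]; exact hminE
    · rw [← hm0]; exact hminE
  have hallge : ∀ i ∈ s2, (E:ℤ) ≤ (E:ℤ) * VK.v (a i) + i := by
    intro i hi
    have := hmmin i hi
    rw [hminE] at this
    rw [← hvF i hi]
    exact this
  have ha0ne : a 0 ≠ 0 := hsne 0 h0mem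
  have ha0v : VK.v (a 0) = 1 := by
    have h1 := hvF 0 h0mem
    rw [hvF0] at h1
    have h2 : (E:ℤ) * VK.v (a 0) = (E:ℤ) * 1 := by push_cast at h1; linarith
    exact mul_left_cancel₀ (by omega) h2
  have haint : ∀ i : ℕ, VK.integer (a i) := by
    intro i
    by_cases hi0 : a i = 0
    · exact Or.inl hi0
    by_cases hiE : i ≤ E
    · have his : i ∈ s2 := Finset.mem_filter.mpr ⟨Finset.mem_range.mpr (by omega), hi0⟩
      have hge := hallge i his
      right
      by_contra hneg
      push_neg at hneg
      have : (E:ℤ) * VK.v (a i) ≤ (E:ℤ) * (-1) := mul_le_mul_of_nonneg_left (by omega) (by omega)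
      have hiE' : (i:ℤ) ≤ (E:ℤ) := by exact_mod_cast hiE
      omega
    · exact absurd (Polynomial.coeff_eq_zero_of_natDegree_lt (by omega)) hi0
  -- minpolyDiv coefficients
  set b : ℕ → L := fun i => (minpolyDiv K tL).coeff i with hbdef
  have hmd_deg : (minpolyDiv K tL).natDegree + 1 = E := by
    rw [natDegree_minpolyDiv_succ hint, ← hgdef, hdeg]
  have hbE1 : b (E-1) = 1 := by
    show (minpolyDiv K tL).coeff (E-1) = 1
    have hnat : (minpolyDiv K tL).natDegree = E - 1 := by omega
    rw [← hnat]
    exact (minpolyDiv_monic hint).coeff_natDegree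
  have hb0 : ∀ i, E ≤ i → b i = 0 := fun i hi =>
    Polynomial.coeff_eq_zero_of_natDegree_lt (by omega)
  have halgint : ∀ x : K, VK.integer x → VL.integer (algebraMap K L x) := by
    intro x hx
    by_cases hx0 : x = 0
    · exact Or.inl (by rw [hx0, map_zero])
    · exact Or.inr (by
        rw [hvalg x hx0]
        exact mul_nonneg (by positivity) (hx.resolve_left hx0))
  have htLint : VL.integer tL := Or.inr (by omega)
  have hpowint : ∀ i : ℕ, VL.integer (tL ^ i) := fun i => Or.inr (by rw [hvpow]; positivity)
  have hbint : ∀ i : ℕ, VL.integer (b i) := by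
    have main : ∀ k i : ℕ, E ≤ i + k → VL.integer (b i) := by
      intro k
      induction k with
      | zero => intro i hi; rw [hb0 i (by omega)]; exact VL.integer_zero
      | succ k ih =>
          intro i hi
          show VL.integer ((minpolyDiv K tL).coeff i)
          rw [coeff_minpolyDiv]
          exact VL.integer_add (halgint _ (haint (i+1)))
            (VL.integer_mul (ih (i+1) (by omega)) htLint)
    intro i
    exact main E i (by omega)
  set g'A : L := Polynomial.aeval tL (Polynomial.derivative g) with hg'Adef
  have hg'A_ne : g'A ≠ 0 := by
    have hsep : (minpoly K tL).Separable := Algebra.IsSeparable.isSeparable K tL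
    obtain ⟨A, B, hAB⟩ := hsep
    intro h0
    have h2 := congrArg (Polynomial.aeval tL) hAB
    rw [map_add, map_mul, map_mul, map_one] at h2
    rw [show (Polynomial.aeval tL) (minpoly K tL) = 0 from minpoly.aeval K tL, mul_zero,
      zero_add] at h2
    rw [show (Polynomial.aeval tL) (Polynomial.derivative (minpoly K tL)) = g'A from rfl] at h2
    rw [h0, mul_zero] at h2
    exact zero_ne_one h2
  have hnd := traceForm_nondegenerate K L
  have hD : ∀ i : Fin E,
      (Algebra.traceForm K L).dualBasis (traceForm_nondegenerate K L) pb.basis i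
        = b i / g'A := fun i => Module.Basis.traceDual_powerBasis_eq pb i
  have hEuler : ∀ mi : Fin E,
      Algebra.trace K L (g'A⁻¹ * tL ^ (mi:ℕ)) = if (mi:ℕ) = E - 1 then 1 else 0 := by
    intro mi
    have hlt : E - 1 < E := by omega
    have h1 := LinearMap.BilinForm.apply_dualBasis_left (B := Algebra.traceForm K L)
      (traceForm_nondegenerate K L) pb.basis ⟨E-1, hlt⟩ mi
    rw [hD ⟨E-1, hlt⟩] at h1
    rw [show b (E-1) = 1 from hbE1] at h1
    rw [Algebra.traceForm_apply] at h1
    rw [show pb.basis mi = tL ^ (mi:ℕ) from hBs mi] at h1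
    rw [one_div] at h1
    rw [h1]
    congr 1
    simp [Fin.ext_iff]
  -- integrality of basis representations of integers
  have hreprInt : ∀ w : L, VL.integer w → ∀ i : Fin E, VK.integer (Bs.repr w i) := by
    intro w hw i
    by_cases hw0 : w = 0
    · rw [hw0]
      simp only [map_zero, Finsupp.coe_zero, Pi.zero_apply]
      exact VK.integer_zero
    set cf : Fin E → K := fun i => Bs.repr w i with hcf
    set sw : Finset (Fin E) := Finset.univ.filter (fun i => cf i ≠ 0) with hswdef
    set fw : Fin E → L := fun i => algebraMap K L (cf i) * tL ^ (i:ℕ) with hfw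
    have hwsum : ∑ i ∈ sw, fw i = w := by
      have h1 := Bs.sum_repr w
      calc ∑ i ∈ sw, fw i = ∑ i, fw i := by
            apply Finset.sum_subset (Finset.subset_univ sw)
            intro i _ hi
            have : cf i = 0 := by simpa [hswdef] using hi
            simp [hfw, this]
        _ = w := by
            rw [← h1]
            exact Finset.sum_congr rfl (fun i _ => by
              rw [hfw, Algebra.smul_def, hBs i])
    by_cases his : i ∈ sw
    case neg =>
      have : cf i = 0 := by simpa [hswdef] using his
      exact Or.inl this
    have hswne : ∀ i ∈ sw, cf i ≠ 0 := fun i hi => by simpa [hswdef] using hi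
    obtain ⟨a0, ha0s, ha0min⟩ := Finset.exists_min_image sw (fun i => VL.v (fw i)) ⟨i, his⟩
    have hsum_eq := VL.sum_eq sw fw a0 ha0s
      (mul_ne_zero (halg0 _ (hswne a0 ha0s)) (pow_ne_zero _ htL0))
      (fun j hjs hja => by
        right
        rcases lt_or_eq_of_le (ha0min j hjs) with h | h
        · exact h
        · exfalso
          apply hja
          have hva : VL.v (fw a0) = (E:ℤ) * VK.v (cf a0) + a0 := hterm _ (hswne a0 ha0s) _
          have hvj : VL.v (fw j) = (E:ℤ) * VK.v (cf j) + j := hterm _ (hswne j hjs) _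
          rw [hva, hvj] at h
          apply Fin.ext
          have := key (VK.v (cf a0) - VK.v (cf j)) (j:ℕ) (a0:ℕ) (by push_cast; linear_combination -h)
            (by have := j.isLt; have := a0.isLt; push_cast; omega)
            (by have := j.isLt; have := a0.isLt; push_cast; omega)
          exact_mod_cast this)
    have hvw : 0 ≤ VL.v w := hw.resolve_left hw0
    have hmin0 : 0 ≤ VL.v (fw a0) := by
      rw [← hsum_eq.2, hwsum]; exact hvw
    have hge : VL.v (fw a0) ≤ VL.v (fw i) := ha0min i his
    have hvi : VL.v (fw i) = (E:ℤ) * VK.v (cf i) + i := hterm _ (hswne i his) _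
    have hfin : 0 ≤ VK.v (cf i) := by
      by_contra hneg
      push_neg at hneg
      have h2 : (E:ℤ) * VK.v (cf i) ≤ (E:ℤ) * (-1) :=
        mul_le_mul_of_nonneg_left (by omega) (by omega)
      have h3 : ((i:ℕ):ℤ) < (E:ℤ) := by exact_mod_cast i.isLt
      omega
    exact Or.inr hfin
  -- the trace characterization
  set γ : ℤ := VL.v g'A with hγdef
  have hchar : ∀ x : L,
      (∀ z : L, VL.integer z → VK.integer (Algebra.trace K L (x * z))) ↔
        (x = 0 ∨ -γ ≤ VL.v x) := by
    intro x
    constructor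
    · intro H
      by_cases hx0 : x = 0
      · exact Or.inl hx0
      right
      set Db := (Algebra.traceForm K L).dualBasis (traceForm_nondegenerate K L) pb.basis with hDb
      have hrepr : ∀ i : Fin E, (Db.repr x i) = Algebra.trace K L (x * tL ^ (i:ℕ)) := by
        intro i
        rw [hDb, LinearMap.BilinForm.dualBasis_repr_apply, Algebra.traceForm_apply,
          show pb.basis i = tL ^ (i:ℕ) from hBs i]
      have hxsum : x = ∑ i, (Db.repr x i) • Db i := (Db.sum_repr x).symm
      have hgx : g'A * x = ∑ i, (Db.repr x i) • b i := by
        conv_lhs => rw [hxsum]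
        rw [Finset.mul_sum]
        apply Finset.sum_congr rfl
        intro i _
        rw [hDb, hD i, Algebra.mul_smul_comm, mul_div_cancel₀ _ hg'A_ne]
      have hint2 : VL.integer (g'A * x) := by
        rw [hgx]
        apply VL.integer_sum
        intro i _
        rw [Algebra.smul_def]
        refine VL.integer_mul (halgint _ ?_) (hbint i)
        rw [hrepr i]
        exact H _ (hpowint (i:ℕ))
      have h4 := hint2.resolve_left (mul_ne_zero hg'A_ne hx0)
      rw [VL.v_mul hg'A_ne hx0] at h4
      omega
    · intro hx z hz
      by_cases hx0 : x = 0
      · rw [hx0, zero_mul, map_zero]; exact VK.integer_zero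
      by_cases hz0 : z = 0
      · rw [hz0, mul_zero, map_zero]; exact VK.integer_zero
      have hvx : -γ ≤ VL.v x := hx.resolve_left hx0
      set w : L := g'A * (x * z) with hwdef
      have hw_int : VL.integer w := Or.inr (by
        rw [hwdef, VL.v_mul hg'A_ne (mul_ne_zero hx0 hz0), VL.v_mul hx0 hz0]
        have := hz.resolve_left hz0
        omega)
      have hxz : x * z = g'A⁻¹ * w := by
        rw [hwdef]
        field_simp
      rw [hxz]
      have hwrepr : w = ∑ i, (Bs.repr w i) • tL ^ (i:ℕ) := by
        conv_lhs => rw [← Bs.sum_repr w]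
        exact Finset.sum_congr rfl (fun i _ => by rw [hBs i])
      rw [hwrepr, Finset.mul_sum, map_sum]
      apply VK.integer_sum
      intro i _
      rw [Algebra.mul_smul_comm, map_smul, smul_eq_mul]
      apply VK.integer_mul (hreprInt w hw_int i)
      rw [hEuler i]
      split
      · exact VK.integer_one
      · exact VK.integer_zero
  have hδγ : δ = γ := by
    have h1 : ∀ n : ℤ, VL.v (tL ^ n) = n := fun n => by rw [VL.v_zpow htL0, htL1, mul_one]
    have htz : ∀ n : ℤ, tL ^ n ≠ 0 := fun n => zpow_ne_zero n htL0
    have hA := (hδ (tL ^ (-δ))).mpr (Or.inr (by rw [h1]))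
    have hB := (hchar (tL ^ (-δ))).mp hA
    have hC := (hchar (tL ^ (-γ))).mpr (Or.inr (by rw [h1]))
    have hDD := (hδ (tL ^ (-γ))).mp hC
    rcases hB with h | h
    · exact absurd h (htz _)
    rcases hDD with h' | h'
    · exact absurd h' (htz _)
    rw [h1] at h h'
    omega
  -- derivation basics
  have dL0 : dL 0 = 0 := by
    have h := hdL_add 0 0
    rw [add_zero] at h
    have h2 : dL 0 + 0 = dL 0 + dL 0 := by rw [add_zero, ← h]
    exact (add_left_cancel h2).symm
  have dL1 : dL (1:L) = 0 := by
    have h := hdL_mul 1 1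
    rw [mul_one, one_smul] at h
    have h2 : dL 1 + 0 = dL 1 + dL 1 := by rw [add_zero, ← h]
    exact (add_left_cancel h2).symm
  have dLpow : ∀ (x : L) (n : ℕ), dL (x ^ n) = (((n:ℕ):L) * x ^ (n-1)) • dL x := by
    intro x n
    induction n with
    | zero => simp [pow_zero, dL1]
    | succ n ih =>
        rw [pow_succ, hdL_mul, ih, smul_smul, ← add_smul]
        congr 1
        cases n with
        | zero => simp
        | succ k =>
            push_cast
            ring
  let DLh : L →+ ΩL := AddMonoidHom.mk' dL hdL_add
  have hdLsum : ∀ (s : Finset ℕ) (f : ℕ → L),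
      dL (∑ i ∈ s, f i) = ∑ i ∈ s, dL (f i) := fun s f => map_sum DLh f s
  -- the element c
  obtain ⟨c, hc⟩ := hLspan tL ⟨htL0, htL1⟩ (ι (dK tK))
  choose a' ha'int ha'eq using fun i : ℕ =>
    hΩKO_gen tK ⟨htK0, htK1⟩ (dK (a i)) (hdKO _ (haint i))
  have hdLa : ∀ i : ℕ, dL (algebraMap K L (a i)) = (algebraMap K L (a' i) * c) • dL tL := by
    intro i
    rw [← hι_d, ha'eq i, hι_smul, hc, smul_smul]
  set S1 : L := ∑ i ∈ Finset.range (E+1), algebraMap K L (a i) * (((i:ℕ):L) * tL^(i-1))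
    with hS1def
  set S2 : L := ∑ i ∈ Finset.range (E+1), tL^i * algebraMap K L (a' i) with hS2def
  have hS : S1 + S2 * c = 0 := by
    have h0 : dL (∑ i ∈ Finset.range (E+1), algebraMap K L (a i) * tL ^ i) = 0 := by
      rw [hrel, dL0]
    rw [hdLsum] at h0
    have hterm2 : ∀ i ∈ Finset.range (E+1),
        dL (algebraMap K L (a i) * tL ^ i) =
          (algebraMap K L (a i) * (((i:ℕ):L) * tL^(i-1)) + tL^i * (algebraMap K L (a' i) * c))
            • dL tL := by
      intro i _
      rw [hdL_mul, dLpow, hdLa, smul_smul, smul_smul, ← add_smul]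
    rw [Finset.sum_congr rfl hterm2, ← Finset.sum_smul] at h0
    have hsc := (smul_eq_zero.mp h0).resolve_right (hdLt_ne tL ⟨htL0, htL1⟩)
    rw [Finset.sum_add_distrib] at hsc
    rw [hS1def, hS2def, Finset.sum_mul]
    rw [← hsc]
    congr 1
    apply Finset.sum_congr rfl
    intro i _
    ring
  have hS1g : S1 = g'A := by
    have hQd0 : Q.natDegree ≠ 0 := by omega
    have hdlt : (Polynomial.derivative Q).natDegree < E := by
      have := Polynomial.natDegree_derivative_lt hQd0
      omega
    have hev : g'A = (Polynomial.derivative Q).eval tL := by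
      rw [hg'Adef, hQdef, Polynomial.derivative_map, Polynomial.eval_map, Polynomial.aeval_def]
    rw [hev, Polynomial.eval_eq_sum_range' hdlt]
    rw [hS1def, Finset.sum_range_succ']
    have hzero : algebraMap K L (a 0) * (((0:ℕ):L) * tL^(0-1)) = 0 := by
      push_cast
      ring
    rw [hzero, add_zero]
    apply Finset.sum_congr rfl
    intro j _
    rw [Polynomial.coeff_derivative, hQdef, Polynomial.coeff_map]
    push_cast
    ring
  have ha'0 : a' 0 ≠ 0 ∧ VK.v (a' 0) = 0 := by
    have hu : VK.IsUniformizer (a 0) := ⟨ha0ne, ha0v⟩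
    obtain ⟨w0, hw0int, hw0eq⟩ := hΩKO_gen (a 0) hu (dK tK) (hdKO tK (Or.inr (by omega)))
    have heq1 : dK tK = (w0 * a' 0) • dK tK := by
      conv_lhs => rw [hw0eq, ha'eq 0]
      rw [smul_smul]
    have h1 : (1 - w0 * a' 0) • dK tK = 0 := by rw [sub_smul, one_smul, ← heq1, sub_self]
    have h2 : w0 * a' 0 = 1 := by
      have := (smul_eq_zero.mp h1).resolve_right (hdKt_ne tK ⟨htK0, htK1⟩)
      have := sub_eq_zero.mp this
      exact this.symm
    have ha'0ne : a' 0 ≠ 0 := by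
      intro h
      rw [h, mul_zero] at h2
      exact zero_ne_one h2
    have hw0ne : w0 ≠ 0 := by
      intro h
      rw [h, zero_mul] at h2
      exact zero_ne_one h2
    refine ⟨ha'0ne, ?_⟩
    have h3 := VK.v_mul hw0ne ha'0ne
    rw [h2, VK.v_one] at h3
    have h4 := hw0int.resolve_left hw0ne
    have h5 := (ha'int 0).resolve_left ha'0ne
    omega
  have hS2v : S2 ≠ 0 ∧ VL.v S2 = 0 := by
    have hsplit : S2 = algebraMap K L (a' 0) +
        ∑ j ∈ Finset.range E, tL^(j+1) * algebraMap K L (a' (j+1)) := by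
      rw [hS2def, Finset.sum_range_succ']
      rw [pow_zero, one_mul, add_comm]
    have hT : (∑ j ∈ Finset.range E, tL^(j+1) * algebraMap K L (a' (j+1))) = 0 ∨
        1 ≤ VL.v (∑ j ∈ Finset.range E, tL^(j+1) * algebraMap K L (a' (j+1))) := by
      apply VL.sum_ge
      intro j _
      by_cases hz : a' (j+1) = 0
      · left; rw [hz, map_zero, mul_zero]
      · right
        rw [VL.v_mul (pow_ne_zero _ htL0) (halg0 _ hz), hvpow, hvalg _ hz]
        have h5 := (ha'int (j+1)).resolve_left hz
        have : 0 ≤ (E:ℤ) * VK.v (a' (j+1)) := mul_nonneg (by omega) h5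
        omega
    have hva'0 : VL.v (algebraMap K L (a' 0)) = 0 := by
      rw [hvalg _ ha'0.1, ha'0.2, mul_zero]
    have := VL.add_eq (x := algebraMap K L (a' 0)) (halg0 _ ha'0.1)
      (y := ∑ j ∈ Finset.range E, tL^(j+1) * algebraMap K L (a' (j+1)))
      (by
        by_cases hz : (∑ j ∈ Finset.range E, tL^(j+1) * algebraMap K L (a' (j+1))) = 0
        · exact Or.inl hz
        · right
          refine ⟨hz, ?_⟩
          have h := hT.resolve_left hz
          rw [hva'0]
          omega)
    rw [← hsplit] at this
    rw [hva'0] at this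
    exact this
  have hcne : c ≠ 0 := by
    intro h
    rw [h, mul_zero, add_zero] at hS
    rw [hS1g] at hS
    exact hg'A_ne hS
  have hvc : VL.v c = δ := by
    have h5 : S2 * c = -g'A := by
      have : S1 = g'A := hS1g
      linear_combination hS - this
    have h6 := VL.v_mul hS2v.1 hcne
    rw [h5, VL.v_neg hg'A_ne] at h6
    rw [hS2v.2] at h6
    omega
  -- uniformizer comparison lemmas
  have htKint : VK.integer tK := Or.inr (by omega)
  have hKrel : ∀ t1 t2 : K, VK.IsUniformizer t1 → VK.IsUniformizer t2 →
      ∃ u ρ : K, dK t1 = u • dK t2 ∧ u = t1 / t2 + t2 * ρ ∧ VK.integer ρ ∧ u ≠ 0 ∧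
        VK.v u = 0 := by
    intro t1 t2 h1 h2
    have hrne : t1 / t2 ≠ 0 := div_ne_zero h1.1 h2.1
    have hrv : VK.v (t1 / t2) = 0 := by
      rw [div_eq_mul_inv, VK.v_mul h1.1 (inv_ne_zero h2.1), VK.v_inv h2.1, h1.2, h2.2]
      omega
    have ht1 : t1 = (t1 / t2) * t2 := (div_mul_cancel₀ t1 h2.1).symm
    obtain ⟨ρ, hρint, hρeq⟩ := hΩKO_gen t2 h2 (dK (t1 / t2))
      (hdKO _ (Or.inr (le_of_eq hrv.symm)))
    have hu := VK.add_eq (x := t1 / t2) hrne (y := t2 * ρ) (by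
      by_cases hρ0 : ρ = 0
      · exact Or.inl (by rw [hρ0, mul_zero])
      · right
        refine ⟨mul_ne_zero h2.1 hρ0, ?_⟩
        rw [VK.v_mul h2.1 hρ0, h2.2, hrv]
        have := hρint.resolve_left hρ0
        omega)
    refine ⟨t1 / t2 + t2 * ρ, ρ, ?_, rfl, hρint, hu.1, by rw [hu.2, hrv]⟩
    conv_lhs => rw [ht1]
    rw [hdK_mul, hρeq, smul_smul, ← add_smul]
  have hLrel : ∀ t1 t2 : L, VL.IsUniformizer t1 → VL.IsUniformizer t2 →
      ∃ u ρ : L, dL t1 = u • dL t2 ∧ u = t1 / t2 + t2 * ρ ∧ VL.integer ρ ∧ u ≠ 0 ∧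
        VL.v u = 0 := by
    intro t1 t2 h1 h2
    have hrne : t1 / t2 ≠ 0 := div_ne_zero h1.1 h2.1
    have hrv : VL.v (t1 / t2) = 0 := by
      rw [div_eq_mul_inv, VL.v_mul h1.1 (inv_ne_zero h2.1), VL.v_inv h2.1, h1.2, h2.2]
      omega
    have ht1 : t1 = (t1 / t2) * t2 := (div_mul_cancel₀ t1 h2.1).symm
    obtain ⟨ρ, hρint, hρeq⟩ := hΩLO_gen t2 h2 (dL (t1 / t2))
      (hdLO _ (Or.inr (le_of_eq hrv.symm)))
    have hu := VL.add_eq (x := t1 / t2) hrne (y := t2 * ρ) (by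
      by_cases hρ0 : ρ = 0
      · exact Or.inl (by rw [hρ0, mul_zero])
      · right
        refine ⟨mul_ne_zero h2.1 hρ0, ?_⟩
        rw [VL.v_mul h2.1 hρ0, h2.2, hrv]
        have := hρint.resolve_left hρ0
        omega)
    refine ⟨t1 / t2 + t2 * ρ, ρ, ?_, rfl, hρint, hu.1, by rw [hu.2, hrv]⟩
    conv_lhs => rw [ht1]
    rw [hdL_mul, hρeq, smul_smul, ← add_smul]
  -- FilOmega helpers
  have hmemΩL : ∀ (m : ℤ) (bb t' : L), VL.integer t' →
      (bb = 0 ∨ -(m+1) ≤ VL.v bb) → (bb • dL t') ∈ FilOmega VL ΩLO m :=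
    fun m bb t' ht' hbb => ⟨bb, hbb, dL t', hdLO t' ht', rfl⟩
  have hmemΩK : ∀ (m : ℤ) (bb t' : K), VK.integer t' →
      (bb = 0 ∨ -(m+1) ≤ VK.v bb) → (bb • dK t') ∈ FilOmega VK ΩKO m :=
    fun m bb t' ht' hbb => ⟨bb, hbb, dK t', hdKO t' ht', rfl⟩
  have hrepΩL : ∀ (m : ℤ) (z : ΩL), z ∈ FilOmega VL ΩLO m →
      ∃ bb : L, z = bb • dL tL ∧ (bb = 0 ∨ -(m+1) ≤ VL.v bb) := by
    intro m z hz
    obtain ⟨cc, hcc, ω, hω, rfl⟩ := hz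
    obtain ⟨c0, hc0int, rfl⟩ := hΩLO_gen tL ⟨htL0, htL1⟩ ω hω
    refine ⟨cc * c0, (smul_smul cc c0 (dL tL)), ?_⟩
    by_cases hcc0 : cc = 0
    · exact Or.inl (by rw [hcc0, zero_mul])
    by_cases hc00 : c0 = 0
    · exact Or.inl (by rw [hc00, mul_zero])
    right
    rw [VL.v_mul hcc0 hc00]
    have h1 := hcc.resolve_left hcc0
    have h2 := hc0int.resolve_left hc00
    omega
  have hrepΩK : ∀ (m : ℤ) (z : ΩK), z ∈ FilOmega VK ΩKO m →
      ∃ bb : K, z = bb • dK tK ∧ (bb = 0 ∨ -(m+1) ≤ VK.v bb) := by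
    intro m z hz
    obtain ⟨cc, hcc, ω, hω, rfl⟩ := hz
    obtain ⟨c0, hc0int, rfl⟩ := hΩKO_gen tK ⟨htK0, htK1⟩ ω hω
    refine ⟨cc * c0, (smul_smul cc c0 (dK tK)), ?_⟩
    by_cases hcc0 : cc = 0
    · exact Or.inl (by rw [hcc0, zero_mul])
    by_cases hc00 : c0 = 0
    · exact Or.inl (by rw [hc00, mul_zero])
    right
    rw [VK.v_mul hcc0 hc00]
    have h1 := hcc.resolve_left hcc0
    have h2 := hc0int.resolve_left hc00
    omega
  have hvalgge : ∀ (x : K) (n : ℤ), x ≠ 0 → -n ≤ VK.v x → -((E:ℤ) * n) ≤ VL.v (algebraMap K L x) := by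
    intro x n hx0 hx
    rw [hvalg x hx0]
    calc -((E:ℤ) * n) = (E:ℤ) * (-n) := by ring
      _ ≤ (E:ℤ) * VK.v x := mul_le_mul_of_nonneg_left (by omega) (by omega)
  have hb3 : ∀ (n : ℤ) (ω : ΩK), ω ∈ FilOmega VK ΩKO n →
      ι ω ∈ FilOmega VL ΩLO (e * (n + 1) - δ - 1) := by
    intro n ω hω
    obtain ⟨bb, rfl, hbb⟩ := hrepΩK n ω hω
    rw [hι_smul, hc, smul_smul]
    apply hmemΩL _ _ _ htLint
    by_cases hbb0 : bb = 0
    · left; rw [hbb0, map_zero, zero_mul]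
    right
    have h1 := hbb.resolve_left hbb0
    rw [VL.v_mul (halg0 _ hbb0) hcne, hvc]
    have h2 := hvalgge bb (n+1) hbb0 h1
    rw [heE]
    linarith
  set θ : L := c * tL * (algebraMap K L tK)⁻¹ with hθdef
  have hθne : θ ≠ 0 := mul_ne_zero (mul_ne_zero hcne htL0) (inv_ne_zero (halg0 _ htK0))
  have hθtL : θ * tL⁻¹ = c * (algebraMap K L tK)⁻¹ * tL * tL⁻¹ := by rw [hθdef]; ring
  refine ⟨?_, ?_, hb3, ?_, ?_, ?_⟩
  · -- F_nK → F_{en}L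
    intro n x hx
    by_cases hx0 : x = 0
    · exact Or.inl (by rw [hx0, map_zero])
    right
    rw [heE]
    exact hvalgge x n hx0 (hx.resolve_left hx0)
  · -- F_{n-1}K → F_{en-1}L
    intro n x hx
    by_cases hx0 : x = 0
    · exact Or.inl (by rw [hx0, map_zero])
    right
    have h2 := hvalgge x (n-1) hx0 (hx.resolve_left hx0)
    have hEn : (E:ℤ) * (n-1) = (E:ℤ)*n - E := by ring
    rw [heE]
    linarith
  · -- F_{n-1}Ω → F_{n'-1}Ω
    intro n ω hω
    obtain ⟨bb, rfl, hbb⟩ := hrepΩK (n-1) ω hω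
    rw [hι_smul, hc, smul_smul]
    apply hmemΩL _ _ _ htLint
    by_cases hbb0 : bb = 0
    · left; rw [hbb0, map_zero, zero_mul]
    right
    have h1 : -n ≤ VK.v bb := by
      have := hbb.resolve_left hbb0
      omega
    rw [VL.v_mul (halg0 _ hbb0) hcne, hvc]
    have h2 := hvalgge bb n hbb0 h1
    have hEn : (E:ℤ) * (n+1) = (E:ℤ)*n + E := by ring
    rw [heE]
    linarith
  · -- θ
    refine ⟨θ, hθne, ?_, ?_, ?_⟩
    · rw [hθdef, VL.v_mul (mul_ne_zero hcne htL0) (inv_ne_zero (halg0 _ htK0)),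
        VL.v_mul hcne htL0, VL.v_inv (halg0 _ htK0), hvalg _ htK0, htK1, htL1, hvc, heE]
      ring
    · -- commuting square
      intro tK' huK' tL' huL' n x hx
      obtain ⟨u, ρ, hueq, hudef, hρint, hune, huv⟩ := hKrel tK' tK huK' ⟨htK0, htK1⟩
      obtain ⟨w, σ, hweq, hwdef, hσint, hwne, hwv⟩ := hLrel tL tL' ⟨htL0, htL1⟩ huL'
      have h1 : ι ((x * tK'⁻¹) • dK tK') = (algebraMap K L (x * tK'⁻¹ * u) * (c * w)) • dL tL' := by
        rw [hueq, smul_smul, hι_smul, hc, hweq, smul_smul, smul_smul, mul_assoc]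
      have h2 : ι ((x * tK'⁻¹) • dK tK') - (θ * algebraMap K L x * tL'⁻¹) • dL tL'
          = (algebraMap K L (x * tK'⁻¹ * u) * (c * w) - θ * algebraMap K L x * tL'⁻¹) • dL tL' := by
        rw [h1, ← sub_smul]
      rw [h2]
      apply hmemΩL _ _ _ (Or.inr (by rw [huL'.2]; omega))
      by_cases hx0 : x = 0
      · left
        simp only [hx0, zero_mul, map_zero, mul_zero, sub_zero]
      set I : L := (algebraMap K L tK')⁻¹ * algebraMap K L u * w
        - tL * (algebraMap K L tK)⁻¹ * tL'⁻¹ with hIdef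
      have hfact : algebraMap K L (x * tK'⁻¹ * u) * (c * w) - θ * algebraMap K L x * tL'⁻¹
          = (algebraMap K L x * c) * I := by
        rw [hIdef, hθdef, map_mul, map_mul, map_inv₀]
        ring
      rw [hfact]
      set J : L := algebraMap K L (tK'/tK) * (tL' * σ)
        + (algebraMap K L tK * algebraMap K L ρ) * (tL/tL')
        + (algebraMap K L tK * algebraMap K L ρ) * (tL' * σ) with hJdef
      have hcan : (algebraMap K L tK')⁻¹ * algebraMap K L tK' = 1 :=
        inv_mul_cancel₀ (halg0 _ huK'.1)
      have e1 : algebraMap K L (tK'/tK) = algebraMap K L tK' * (algebraMap K L tK)⁻¹ := by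
        rw [map_div₀, div_eq_mul_inv]
      have hIJ : I = (algebraMap K L tK')⁻¹ * J := by
        rw [hIdef, hJdef, hudef, hwdef, map_add, map_mul, e1, div_eq_mul_inv tL tL']
        linear_combination ((algebraMap K L tK)⁻¹ * tL * tL'⁻¹) * hcan
      have hrKv : VK.v (tK'/tK) = 0 := by
        rw [div_eq_mul_inv, VK.v_mul huK'.1 (inv_ne_zero htK0), VK.v_inv htK0, huK'.2, htK1]
        omega
      have hrKne : tK'/tK ≠ 0 := div_ne_zero huK'.1 htK0
      have hrLv : VL.v (tL/tL') = 0 := by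
        rw [div_eq_mul_inv, VL.v_mul htL0 (inv_ne_zero huL'.1), VL.v_inv huL'.1, huL'.2, htL1]
        omega
      have hrLne : tL/tL' ≠ 0 := div_ne_zero htL0 huL'.1
      have hJge : J = 0 ∨ 1 ≤ VL.v J := by
        rw [hJdef]
        apply VL.add_ge
        apply VL.add_ge
        · by_cases hσ0 : σ = 0
          · left; rw [hσ0, mul_zero, mul_zero]
          right
          rw [VL.v_mul (halg0 _ hrKne) (mul_ne_zero huL'.1 hσ0),
            VL.v_mul huL'.1 hσ0, hvalg _ hrKne, hrKv, huL'.2]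
          have := hσint.resolve_left hσ0
          have : 0 ≤ VL.v σ := this
          omega
        · by_cases hρ0 : ρ = 0
          · left; rw [hρ0, map_zero, mul_zero, zero_mul]
          right
          rw [VL.v_mul (mul_ne_zero (halg0 _ htK0) (halg0 _ hρ0)) hrLne,
            VL.v_mul (halg0 _ htK0) (halg0 _ hρ0), hvalg _ htK0, htK1, hvalg _ hρ0, hrLv]
          have h5 := hρint.resolve_left hρ0
          have h6 : 0 ≤ (E:ℤ) * VK.v ρ := mul_nonneg (by omega) h5
          omega
        · by_cases hρ0 : ρ = 0
          · left; rw [hρ0, map_zero, mul_zero, zero_mul]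
          by_cases hσ0 : σ = 0
          · left; rw [hσ0, mul_zero, mul_zero]
          right
          rw [VL.v_mul (mul_ne_zero (halg0 _ htK0) (halg0 _ hρ0)) (mul_ne_zero huL'.1 hσ0),
            VL.v_mul (halg0 _ htK0) (halg0 _ hρ0), hvalg _ htK0, htK1, hvalg _ hρ0,
            VL.v_mul huL'.1 hσ0, huL'.2]
          have h5 := hρint.resolve_left hρ0
          have h6 : 0 ≤ (E:ℤ) * VK.v ρ := mul_nonneg (by omega) h5
          have h7 := hσint.resolve_left hσ0
          omega
      by_cases hJ0 : J = 0
      · left; rw [hIJ, hJ0, mul_zero, mul_zero]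
      right
      have hJv := hJge.resolve_left hJ0
      have hIne : I ≠ 0 := by
        rw [hIJ]
        exact mul_ne_zero (inv_ne_zero (halg0 _ huK'.1)) hJ0
      have hIv : -(E:ℤ) + 1 ≤ VL.v I := by
        rw [hIJ, VL.v_mul (inv_ne_zero (halg0 _ huK'.1)) hJ0, VL.v_inv (halg0 _ huK'.1),
          hvalg _ huK'.1, huK'.2]
        omega
      rw [VL.v_mul (mul_ne_zero (halg0 _ hx0) hcne) hIne, VL.v_mul (halg0 _ hx0) hcne, hvc]
      have h8 := hvalgge x n hx0 (hx.resolve_left hx0)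
      have hEn : (E:ℤ) * (n+1) = (E:ℤ)*n + E := by ring
      rw [heE]
      linarith
    · -- uniqueness
      intro θ' hθ'ne hθ'v hcomm
      have hmem := hcomm tK ⟨htK0, htK1⟩ tL ⟨htL0, htL1⟩ 0 1 (Or.inr (by rw [VK.v_one]; omega))
      obtain ⟨bb, hbbeq, hbb⟩ := hrepΩL _ _ hmem
      have hlhs : ι ((1 * tK⁻¹) • dK tK) - (θ' * algebraMap K L 1 * tL⁻¹) • dL tL
          = ((θ - θ') * tL⁻¹) • dL tL := by
        rw [hι_smul, hc, smul_smul, ← sub_smul]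
        congr 1
        rw [hθdef, map_mul, map_one, map_inv₀]
        have hcan2 : tL * tL⁻¹ = 1 := mul_inv_cancel₀ htL0
        linear_combination (-((algebraMap K L tK)⁻¹ * c)) * hcan2
      rw [hlhs] at hbbeq
      have hbbval : bb = (θ - θ') * tL⁻¹ := by
        have h9 : ((θ - θ') * tL⁻¹ - bb) • dL tL = 0 := by
          rw [sub_smul, ← hbbeq, sub_self]
        have h10 := (smul_eq_zero.mp h9).resolve_right (hdLt_ne tL ⟨htL0, htL1⟩)
        exact (sub_eq_zero.mp h10).symm
      by_cases hd0 : θ - θ' = 0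
      · exact Or.inl hd0
      right
      have hbne : bb ≠ 0 := by rw [hbbval]; exact mul_ne_zero hd0 (inv_ne_zero htL0)
      have h11 := hbb.resolve_left hbne
      rw [hbbval, VL.v_mul hd0 (inv_ne_zero htL0), VL.v_inv htL0, htL1] at h11
      omega
  · -- exact valuation statement
    intro n χ hin hout
    obtain ⟨bb, rfl, hbb⟩ := hrepΩK n χ hin
    have hbne : bb ≠ 0 := by
      rintro rfl
      exact hout (hmemΩK (n-1) 0 tK htKint (Or.inl rfl))
    have hvbb : VK.v bb = -(n+1) := by
      have h1 := hbb.resolve_left hbne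
      by_contra hne2
      exact hout (hmemΩK (n-1) bb tK htKint (Or.inr (by omega)))
    refine ⟨hb3 n _ hin, ?_⟩
    intro hmem
    obtain ⟨bb2, hbb2eq, hbb2⟩ := hrepΩL _ _ hmem
    have hιχ : ι (bb • dK tK) = (algebraMap K L bb * c) • dL tL := by
      rw [hι_smul, hc, smul_smul]
    have heq2 : bb2 = algebraMap K L bb * c := by
      have h9 : (bb2 - algebraMap K L bb * c) • dL tL = 0 := by
        rw [sub_smul, ← hιχ, ← hbb2eq, sub_self]
      have h10 := (smul_eq_zero.mp h9).resolve_right (hdLt_ne tL ⟨htL0, htL1⟩)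
      exact sub_eq_zero.mp h10
    have hbb2ne : bb2 ≠ 0 := by
      rw [heq2]; exact mul_ne_zero (halg0 _ hbne) hcne
    have h10 := hbb2.resolve_left hbb2ne
    rw [heq2, VL.v_mul (halg0 _ hbne) hcne, hvalg _ hbne, hvbb, hvc] at h10
    rw [heE] at h10
    have h12 : (E:ℤ) * (-(n+1)) = -((E:ℤ)*(n+1)) := by ring
    rw [h12] at h10
    linarith
end
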